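/- Let H be a maximal proper additive subgroup of Λ_s satisfying 2Λ_s + H = Λ_s, and let p : Φ̊ → Y be ℤ-linear with p(α) ∈ Λ_s for every α ∈ Φ̊_s and p(α) ∈ Λ_ℓ for every α ∈ Φ̊_ℓ. Then Ψ := {(α, p(α)+h) : α ∈ Φ̊_s, h ∈ H} ∪ {(α, μ) : α ∈ Φ̊_ℓ, μ ∈ (p(α)+H) ∩ Λ_ℓ} is a maximal root subsystem of Φ. -/

import Mathlib

/-!
All coroots of `C_n` lie in `ℤ^n` (short roots are the vectors of `ℤ^n` of squared length 2,
long roots are twice those of squared length 1), so the Cartan integers `⟨β, γ^∨⟩` are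
integers, even when `β` is long, and reflections preserve both root lengths. Together with the
`ℤ`-linearity of `p`, reflecting `(β, p β + z)` in `(γ, p γ + z')` gives
`(s_γ β, p (s_γ β) + z - ⟨β, γ^∨⟩ z')`; hence `Ψ` is closed, parity keeping long roots over `Λ_ℓ`.

For maximality let `Ψ' ⊋ Ψ` be a root subsystem. As `Ψ'` contains the graph of `p` and the Weyl
group is transitive on short roots, the set of `z` with `(β, p β + z) ∈ Ψ'` does not depend on
the short root `β`; since (for `n ≥ 3`) every short root is `α - γ` with `α`, `γ` short and
`⟨α, γ^∨⟩ = 1`, it is a subgroup `K` with `H ≤ K ≤ Λ_s`. An element of `Ψ' \ Ψ` puts some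
`z ∉ H` into `K`, so `K = Λ_s` and `Ψ'` contains every short root. Finally a long root `(α, μ)`
with `μ - p α = 2x + h` is reached from `(α, p α + h) ∈ Ψ` by reflecting in `(β, p β - x)` and
then in `(β, p β)`, for a short `β` with `⟨α, β^∨⟩ = 2`.
-/

open RealInnerProductSpace

noncomputable section

/-- The standard basis vector `e i` of `ℝ^n`. -/
def ee (n : ℕ) (i : Fin n) : EuclideanSpace ℝ (Fin n) := EuclideanSpace.single i 1

/-- The set `{±e_i : 1 ≤ i ≤ n}`. -/
def pmE (n : ℕ) : Set (EuclideanSpace ℝ (Fin n)) :=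
  {v | ∃ i : Fin n, v = ee n i ∨ v = -ee n i}

/-- The set `{±e_i ± e_j : i ≠ j}`. -/
def pmEE (n : ℕ) : Set (EuclideanSpace ℝ (Fin n)) :=
  {v | ∃ i j : Fin n, i ≠ j ∧ ∃ ε δ : ℝ, (ε = 1 ∨ ε = -1) ∧ (δ = 1 ∨ δ = -1) ∧
    v = ε • ee n i + δ • ee n j}

/-- The set `{±2e_i : 1 ≤ i ≤ n}`. -/
def pm2E (n : ℕ) : Set (EuclideanSpace ℝ (Fin n)) :=
  {v | ∃ i : Fin n, v = (2 : ℝ) • ee n i ∨ v = -((2 : ℝ) • ee n i)}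

/-- The reflection `s_α(β) = β − (2⟨β,α⟩/⟨α,α⟩)α`. -/
def reflV {V : Type*} [NormedAddCommGroup V] [InnerProductSpace ℝ V] (α β : V) : V :=
  β - (2 * ⟪β, α⟫ / ⟪α, α⟫) • α

/-- A root subsystem of `Φ` (w.r.t. a given reflection map): a nonempty subset of `Φ`
closed under the reflections in its own elements. -/
def IsRootSubsystem {X : Type*} (refl : X → X → X) (Φ Ψ : Set X) : Prop :=
  Ψ.Nonempty ∧ Ψ ⊆ Φ ∧ ∀ a ∈ Ψ, ∀ b ∈ Ψ, refl a b ∈ Ψ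

/-- A maximal root subsystem of `Φ`: a proper root subsystem such that every root
subsystem `Ψ'` with `Ψ ⊆ Ψ' ≠ Φ` equals `Ψ`. -/
def IsMaximalRootSubsystem {X : Type*} (refl : X → X → X) (Φ Ψ : Set X) : Prop :=
  IsRootSubsystem refl Φ Ψ ∧ Ψ ≠ Φ ∧
    ∀ Ψ' : Set X, IsRootSubsystem refl Φ Ψ' → Ψ ⊆ Ψ' → Ψ' ≠ Φ → Ψ' = Ψ

/-- The affine reflection `s_a(b) = b − (2⟨b₁,a₁⟩/⟨a₁,a₁⟩)·a` on `V × Y`. -/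
def reflA {V Y : Type*} [NormedAddCommGroup V] [InnerProductSpace ℝ V]
    [AddCommGroup Y] [Module ℝ Y] (a b : V × Y) : V × Y :=
  b - (2 * ⟪b.1, a.1⟫ / ⟪a.1, a.1⟫) • a

/-- `p : Φ̊ → Y` is ℤ-linear: `p(s_α(β)) = p(β) − (2⟨β,α⟩/⟨α,α⟩)·p(α)` for `α, β ∈ Φ̊`. -/
def IsZLin {V Y : Type*} [NormedAddCommGroup V] [InnerProductSpace ℝ V]
    [AddCommGroup Y] [Module ℝ Y] (Φ₀ : Set V) (p : V → Y) : Prop :=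
  ∀ α ∈ Φ₀, ∀ β ∈ Φ₀, p (reflV α β) = p β - (2 * ⟪β, α⟫ / ⟪α, α⟫) • p α

section Lattice

variable {n : ℕ}

def intLattice (n : ℕ) : AddSubgroup (EuclideanSpace ℝ (Fin n)) where
  carrier := {v | ∀ k, ∃ z : ℤ, v k = z}
  add_mem' {u v} hu hv k := by
    obtain ⟨a, ha⟩ := hu k
    obtain ⟨b, hb⟩ := hv k
    exact ⟨a + b, by simp [ha, hb]⟩
  zero_mem' _ := ⟨0, by simp⟩
  neg_mem' {v} hv k := by
    obtain ⟨a, ha⟩ := hv k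
    exact ⟨-a, by simp [ha]⟩

lemma ee_apply (i j : Fin n) : ee n i j = if j = i then 1 else 0 := by
  simp [ee]

lemma inner_ee_right (v : EuclideanSpace ℝ (Fin n)) (i : Fin n) : ⟪v, ee n i⟫ = v i := by
  simp [ee, EuclideanSpace.inner_single_right]

lemma inner_ee_left (v : EuclideanSpace ℝ (Fin n)) (i : Fin n) : ⟪ee n i, v⟫ = v i := by
  rw [real_inner_comm, inner_ee_right]

lemma inner_ee (i j : Fin n) : ⟪ee n i, ee n j⟫ = if i = j then 1 else 0 := by
  simp [inner_ee_right, ee_apply, eq_comm]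

lemma ee_mem_intLattice (i : Fin n) : ee n i ∈ intLattice n := fun k =>
  ⟨if k = i then 1 else 0, by rw [ee_apply]; split_ifs <;> simp⟩

lemma exists_int_inner_eq {u v : EuclideanSpace ℝ (Fin n)} (hu : u ∈ intLattice n)
    (hv : v ∈ intLattice n) : ∃ z : ℤ, ⟪u, v⟫ = z := by
  choose a ha using hu
  choose b hb using hv
  exact ⟨∑ k, b k * a k, by simp [PiLp.inner_apply, ha, hb]⟩

lemma inner_self_sub_smul_ee (v : EuclideanSpace ℝ (Fin n)) (i : Fin n) :
    ⟪v - v i • ee n i, v - v i • ee n i⟫ = ⟪v, v⟫ - v i ^ 2 := by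
  simp only [inner_sub_left, inner_sub_right, real_inner_smul_left, real_inner_smul_right,
    inner_ee_left, inner_ee_right, ee_apply, ↓reduceIte]
  ring

lemma exists_apply_eq_one_or_neg_one {v : EuclideanSpace ℝ (Fin n)} (hv : v ∈ intLattice n)
    (h0 : v ≠ 0) (h2 : ⟪v, v⟫ ≤ 2) : ∃ i, v i = 1 ∨ v i = -1 := by
  by_contra! h
  refine h0 (PiLp.ext fun i => ?_)
  obtain ⟨z, hz⟩ := hv i
  have hsq : (z : ℝ) ^ 2 ≤ 2 := by
    have := real_inner_self_nonneg (x := v - v i • ee n i)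
    rw [inner_self_sub_smul_ee, hz] at this
    linarith
  have hsq' : z ^ 2 ≤ 2 := by exact_mod_cast hsq
  have : z = 0 := by
    obtain ⟨h1, h2⟩ := h i
    have : z ≠ 1 := fun h => h1 (by simp [hz, h])
    have : z ≠ -1 := fun h => h2 (by simp [hz, h])
    have : -1 ≤ z ∧ z ≤ 1 := ⟨by nlinarith, by nlinarith⟩
    omega
  simp [hz, this]

lemma mem_pmE_iff {u : EuclideanSpace ℝ (Fin n)} :
    u ∈ pmE n ↔ u ∈ intLattice n ∧ ⟪u, u⟫ = 1 := by
  constructor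
  · rintro ⟨i, rfl | rfl⟩
    · exact ⟨ee_mem_intLattice i, by rw [inner_ee, if_pos rfl]⟩
    · exact ⟨neg_mem (ee_mem_intLattice i), by rw [inner_neg_neg, inner_ee, if_pos rfl]⟩
  rintro ⟨hu, h1⟩
  obtain ⟨i, hi⟩ := exists_apply_eq_one_or_neg_one hu (by rintro rfl; simp at h1) (by linarith)
  have hzero : u - u i • ee n i = 0 := by
    rw [← inner_self_eq_zero (𝕜 := ℝ), inner_self_sub_smul_ee, h1]
    rcases hi with hi | hi <;> simp [hi]
  refine ⟨i, ?_⟩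
  rw [sub_eq_zero.mp hzero]
  rcases hi with hi | hi <;> simp [hi]

lemma smul_ee_mem_pmE {ε : ℝ} (hε : ε = 1 ∨ ε = -1) (i : Fin n) : ε • ee n i ∈ pmE n := by
  rcases hε with rfl | rfl
  exacts [⟨i, Or.inl (one_smul _ _)⟩, ⟨i, Or.inr (neg_one_smul _ _)⟩]

lemma mem_pmEE_iff {v : EuclideanSpace ℝ (Fin n)} :
    v ∈ pmEE n ↔ v ∈ intLattice n ∧ ⟪v, v⟫ = 2 := by
  constructor
  · rintro ⟨i, j, hij, ε, δ, hε, hδ, rfl⟩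
    obtain ⟨hiL, hi1⟩ := mem_pmE_iff.mp (smul_ee_mem_pmE hε i)
    obtain ⟨hjL, hj1⟩ := mem_pmE_iff.mp (smul_ee_mem_pmE hδ j)
    have hij0 : ⟪ε • ee n i, δ • ee n j⟫ = 0 := by
      simp [real_inner_smul_left, real_inner_smul_right, inner_ee, hij]
    refine ⟨add_mem hiL hjL, ?_⟩
    rw [real_inner_add_add_self, hi1, hj1, hij0]
    norm_num
  rintro ⟨hv, h2⟩
  obtain ⟨i, hi⟩ := exists_apply_eq_one_or_neg_one hv (by rintro rfl; simp at h2) h2.le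
  have hw : v - v i • ee n i ∈ pmE n := by
    refine mem_pmE_iff.mpr ⟨sub_mem hv ?_, ?_⟩
    · rcases hi with hi | hi <;> simp [hi, ee_mem_intLattice]
    · rw [inner_self_sub_smul_ee, h2]
      rcases hi with hi | hi <;> norm_num [hi]
  obtain ⟨j, hj⟩ := hw
  have hji : j ≠ i := by
    have hwi : (v - v i • ee n i) i = 0 := by simp [ee_apply]
    rintro rfl
    rcases hj with hj | hj <;> simp [hj, ee_apply] at hwi
  refine ⟨i, j, hji.symm, v i, ?_⟩
  rcases hj with hj | hj
  · exact ⟨1, hi, Or.inl rfl, by rw [one_smul, ← hj, add_sub_cancel]⟩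
  · exact ⟨-1, hi, Or.inr rfl, by rw [neg_one_smul, ← hj, add_sub_cancel]⟩

lemma mem_pm2E_iff {v : EuclideanSpace ℝ (Fin n)} :
    v ∈ pm2E n ↔ ∃ u ∈ pmE n, v = (2 : ℝ) • u := by
  constructor
  · rintro ⟨i, rfl | rfl⟩
    exacts [⟨_, ⟨i, Or.inl rfl⟩, rfl⟩, ⟨_, ⟨i, Or.inr rfl⟩, (smul_neg _ _).symm⟩]
  · rintro ⟨u, ⟨i, rfl | rfl⟩, rfl⟩
    exacts [⟨i, Or.inl rfl⟩, ⟨i, Or.inr (smul_neg _ _)⟩]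

end Lattice

section Reflection

variable {V : Type*} [NormedAddCommGroup V] [InnerProductSpace ℝ V]

lemma reflV_reflV (α β : V) : reflV α (reflV α β) = β := by
  rcases eq_or_ne α 0 with rfl | h
  · simp [reflV]
  have h' : ⟪α, α⟫ ≠ 0 := inner_self_ne_zero.mpr h
  have hc : 2 * ⟪reflV α β, α⟫ / ⟪α, α⟫ = -(2 * ⟪β, α⟫ / ⟪α, α⟫) := by
    rw [reflV, inner_sub_left, real_inner_smul_left]
    field_simp
    ring
  rw [reflV, hc, reflV]
  module

lemma inner_reflV_reflV (α β : V) : ⟪reflV α β, reflV α β⟫ = ⟪β, β⟫ := by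
  rcases eq_or_ne α 0 with rfl | h
  · simp [reflV]
  have h' : ⟪α, α⟫ ≠ 0 := inner_self_ne_zero.mpr h
  simp only [reflV, inner_sub_left, inner_sub_right, real_inner_smul_left,
    real_inner_smul_right, real_inner_comm β α]
  field_simp
  ring

lemma reflV_smul (α β : V) (a : ℝ) : reflV α (a • β) = a • reflV α β := by
  simp only [reflV, real_inner_smul_left, smul_sub, smul_smul]
  congr 2
  ring

lemma reflV_mem_iff {Φ₀ S : Set V} (hS : ∀ γ ∈ Φ₀, ∀ β ∈ S, reflV γ β ∈ S) {γ : V}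
    (hγ : γ ∈ Φ₀) {β : V} : reflV γ β ∈ S ↔ β ∈ S :=
  ⟨fun h => reflV_reflV γ β ▸ hS γ hγ _ h, hS γ hγ β⟩

lemma cartan_sub_eq_one_of_inner_eq_one {α β : V} (hα : ⟪α, α⟫ = 2) (hβ : ⟪β, β⟫ = 2)
    (hαβ : ⟪α, β⟫ = 1) : 2 * ⟪α, α - β⟫ / ⟪α - β, α - β⟫ = 1 := by
  rw [inner_sub_right, real_inner_sub_sub_self, hα, hβ, hαβ]
  norm_num

lemma reflV_sub_of_inner_eq_one {α β : V} (hα : ⟪α, α⟫ = 2) (hβ : ⟪β, β⟫ = 2)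
    (hαβ : ⟪α, β⟫ = 1) : reflV (α - β) α = β := by
  rw [reflV, cartan_sub_eq_one_of_inner_eq_one hα hβ hαβ, one_smul, sub_sub_cancel]

end Reflection

section Roots

variable {n : ℕ} {β γ : EuclideanSpace ℝ (Fin n)}

lemma mem_intLattice_of_mem_roots (hγ : γ ∈ pmEE n ∪ pm2E n) : γ ∈ intLattice n := by
  rcases hγ with hγ | hγ
  · exact (mem_pmEE_iff.mp hγ).1
  · obtain ⟨u, hu, rfl⟩ := mem_pm2E_iff.mp hγ
    rw [two_smul]
    exact add_mem (mem_pmE_iff.mp hu).1 (mem_pmE_iff.mp hu).1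

lemma inner_self_of_mem_pm2E (hβ : β ∈ pm2E n) : ⟪β, β⟫ = 4 := by
  obtain ⟨u, hu, rfl⟩ := mem_pm2E_iff.mp hβ
  rw [real_inner_smul_left, real_inner_smul_right, (mem_pmE_iff.mp hu).2]
  norm_num

/-- `2 * ⟪β, γ⟫ / ⟪γ, γ⟫` is the Cartan integer `⟨β, γ^∨⟩`. -/
lemma exists_int_eq_cartan (hγ : γ ∈ pmEE n ∪ pm2E n) (hβ : β ∈ intLattice n) :
    ∃ k : ℤ, 2 * ⟪β, γ⟫ / ⟪γ, γ⟫ = k := by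
  rcases hγ with hγ | hγ
  · obtain ⟨hγL, hγγ⟩ := mem_pmEE_iff.mp hγ
    obtain ⟨k, hk⟩ := exists_int_inner_eq hβ hγL
    exact ⟨k, by rw [hγγ, hk]; ring⟩
  · obtain ⟨u, hu, rfl⟩ := mem_pm2E_iff.mp hγ
    obtain ⟨huL, huu⟩ := mem_pmE_iff.mp hu
    obtain ⟨k, hk⟩ := exists_int_inner_eq hβ huL
    refine ⟨k, ?_⟩
    rw [real_inner_smul_right, real_inner_smul_left, real_inner_smul_right, huu, hk]
    ring

lemma exists_int_eq_cartan_of_mem_pm2E (hγ : γ ∈ pmEE n ∪ pm2E n) (hβ : β ∈ pm2E n) :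
    ∃ k : ℤ, 2 * ⟪β, γ⟫ / ⟪γ, γ⟫ = 2 * k := by
  obtain ⟨u, hu, rfl⟩ := mem_pm2E_iff.mp hβ
  obtain ⟨k, hk⟩ := exists_int_eq_cartan hγ (mem_pmE_iff.mp hu).1
  refine ⟨k, ?_⟩
  rw [real_inner_smul_left, ← hk]
  ring

lemma reflV_mem_intLattice (hγ : γ ∈ pmEE n ∪ pm2E n) (hβ : β ∈ intLattice n) :
    reflV γ β ∈ intLattice n := by
  obtain ⟨k, hk⟩ := exists_int_eq_cartan hγ hβ
  rw [reflV, hk, Int.cast_smul_eq_zsmul]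
  exact sub_mem hβ (zsmul_mem (mem_intLattice_of_mem_roots hγ) k)

lemma reflV_mem_pmE (hγ : γ ∈ pmEE n ∪ pm2E n) (hβ : β ∈ pmE n) : reflV γ β ∈ pmE n := by
  rw [mem_pmE_iff] at hβ ⊢
  exact ⟨reflV_mem_intLattice hγ hβ.1, (inner_reflV_reflV γ β).trans hβ.2⟩

lemma reflV_mem_pmEE (hγ : γ ∈ pmEE n ∪ pm2E n) (hβ : β ∈ pmEE n) : reflV γ β ∈ pmEE n := by
  rw [mem_pmEE_iff] at hβ ⊢
  exact ⟨reflV_mem_intLattice hγ hβ.1, (inner_reflV_reflV γ β).trans hβ.2⟩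

lemma reflV_mem_pm2E (hγ : γ ∈ pmEE n ∪ pm2E n) (hβ : β ∈ pm2E n) : reflV γ β ∈ pm2E n := by
  obtain ⟨u, hu, rfl⟩ := mem_pm2E_iff.mp hβ
  exact mem_pm2E_iff.mpr ⟨_, reflV_mem_pmE hγ hu, reflV_smul γ u 2⟩

lemma sub_mem_pmEE_of_inner_eq_one {α β : EuclideanSpace ℝ (Fin n)} (hα : α ∈ pmEE n)
    (hβ : β ∈ pmEE n) (hαβ : ⟪α, β⟫ = 1) : α - β ∈ pmEE n := by
  rw [mem_pmEE_iff] at hα hβ ⊢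
  refine ⟨sub_mem hα.1 hβ.1, ?_⟩
  rw [real_inner_sub_sub_self, hα.2, hβ.2, hαβ]
  norm_num

end Roots

section Combinatorics

variable {n : ℕ}

lemma exists_ne_ne (hn : 3 ≤ n) (i j : Fin n) : ∃ m, m ≠ i ∧ m ≠ j := by
  have hcard : 0 < ((Finset.univ.erase i).erase j).card := by
    have h1 := Finset.pred_card_le_card_erase (s := Finset.univ.erase i) (a := j)
    have h2 := Finset.pred_card_le_card_erase (s := (Finset.univ : Finset (Fin n))) (a := i)
    simp only [Finset.card_univ, Fintype.card_fin] at h2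
    omega
  obtain ⟨m, hm⟩ := Finset.card_pos.mp hcard
  simp only [Finset.mem_erase] at hm
  exact ⟨m, hm.2.1, hm.1⟩

lemma pmEE_nonempty (hn : 2 ≤ n) : (pmEE n).Nonempty := by
  have := Fin.nontrivial_iff_two_le.mpr hn
  obtain ⟨i, j, hij⟩ := exists_pair_ne (Fin n)
  exact ⟨_, i, j, hij, 1, 1, Or.inl rfl, Or.inl rfl, rfl⟩

lemma exists_mem_pmEE_inner_eq_one (hn : 3 ≤ n) {β : EuclideanSpace ℝ (Fin n)}
    (hβ : β ∈ pmEE n) : ∃ α ∈ pmEE n, ⟪α, β⟫ = 1 := by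
  obtain ⟨i, j, hij, ε, δ, hε, hδ, rfl⟩ := hβ
  obtain ⟨m, hmi, hmj⟩ := exists_ne_ne hn i j
  refine ⟨_, ⟨i, m, hmi.symm, ε, 1, hε, Or.inl rfl, rfl⟩, ?_⟩
  simp only [inner_add_left, inner_add_right, real_inner_smul_left, real_inner_smul_right,
    inner_ee, hij, hmi, hmj, ↓reduceIte]
  rcases hε with rfl | rfl <;> norm_num

lemma exists_mem_pmEE_inner_eq_two (hn : 2 ≤ n) {α : EuclideanSpace ℝ (Fin n)}
    (hα : α ∈ pm2E n) : ∃ β ∈ pmEE n, ⟪α, β⟫ = 2 := by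
  obtain ⟨u, hu, rfl⟩ := mem_pm2E_iff.mp hα
  obtain ⟨huL, huu⟩ := mem_pmE_iff.mp hu
  obtain ⟨i, hi⟩ := hu
  have := Fin.nontrivial_iff_two_le.mpr hn
  obtain ⟨m, hmi⟩ := exists_ne i
  have hum : ⟪u, ee n m⟫ = 0 := by
    rcases hi with rfl | rfl <;> simp [inner_ee, hmi.symm]
  refine ⟨u + ee n m, mem_pmEE_iff.mpr ⟨add_mem huL (ee_mem_intLattice m), ?_⟩, ?_⟩
  · rw [real_inner_add_add_self, huu, hum, inner_ee, if_pos rfl]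
    norm_num
  · rw [real_inner_smul_left, inner_add_right, huu, hum]
    norm_num

lemma reflV_two_smul_ee {i j : Fin n} (hij : i ≠ j) (a b : ℝ) :
    reflV ((2 : ℝ) • ee n i) (a • ee n i + b • ee n j) = (-a) • ee n i + b • ee n j := by
  simp only [reflV, inner_add_left, real_inner_smul_left, real_inner_smul_right, inner_ee,
    hij.symm, ↓reduceIte]
  match_scalars <;> ring

section Orbit

variable {S : Set (EuclideanSpace ℝ (Fin n))}

lemma smul_add_smul_mem_iff (hS : ∀ γ ∈ pmEE n ∪ pm2E n, ∀ β ∈ S, reflV γ β ∈ S)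
    {i j : Fin n} (hij : i ≠ j) {ε δ : ℝ} (hε : ε = 1 ∨ ε = -1) (hδ : δ = 1 ∨ δ = -1) :
    ε • ee n i + δ • ee n j ∈ S ↔ ee n i + ee n j ∈ S := by
  have hflip : ∀ {i j : Fin n}, i ≠ j → ∀ b : ℝ,
      (-1 : ℝ) • ee n i + b • ee n j ∈ S ↔ ee n i + b • ee n j ∈ S := fun {i j} hij b => by
    have := reflV_mem_iff hS (Or.inr ⟨i, Or.inl rfl⟩) (β := (1 : ℝ) • ee n i + b • ee n j)
    rwa [reflV_two_smul_ee hij, one_smul] at this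
  have hfirst : ε • ee n i + δ • ee n j ∈ S ↔ ee n i + δ • ee n j ∈ S := by
    rcases hε with rfl | rfl
    exacts [by rw [one_smul], hflip hij δ]
  rw [hfirst]
  rcases hδ with rfl | rfl
  · rw [one_smul]
  · simpa [add_comm] using hflip hij.symm 1

lemma mem_iff_of_inner_eq_one (hS : ∀ γ ∈ pmEE n ∪ pm2E n, ∀ β ∈ S, reflV γ β ∈ S)
    {α β : EuclideanSpace ℝ (Fin n)} (hα : α ∈ pmEE n) (hβ : β ∈ pmEE n) (hαβ : ⟪α, β⟫ = 1) :
    α ∈ S ↔ β ∈ S := by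
  rw [← reflV_mem_iff hS (Or.inl (sub_mem_pmEE_of_inner_eq_one hα hβ hαβ)),
    reflV_sub_of_inner_eq_one (mem_pmEE_iff.mp hα).2 (mem_pmEE_iff.mp hβ).2 hαβ]

lemma add_ee_mem_iff_of_ne (hS : ∀ γ ∈ pmEE n ∪ pm2E n, ∀ β ∈ S, reflV γ β ∈ S)
    {i j k : Fin n} (hij : i ≠ j) (hik : i ≠ k) : ee n i + ee n j ∈ S ↔ ee n i + ee n k ∈ S := by
  rcases eq_or_ne j k with rfl | hjk
  · rfl
  refine mem_iff_of_inner_eq_one hS ⟨i, j, hij, 1, 1, Or.inl rfl, Or.inl rfl, by simp⟩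
    ⟨i, k, hik, 1, 1, Or.inl rfl, Or.inl rfl, by simp⟩ ?_
  simp only [inner_add_left, inner_add_right, inner_ee, hij.symm, hik, hjk, ↓reduceIte]
  norm_num

lemma add_ee_mem_iff (hS : ∀ γ ∈ pmEE n ∪ pm2E n, ∀ β ∈ S, reflV γ β ∈ S)
    {i j k l : Fin n} (hij : i ≠ j) (hkl : k ≠ l) : ee n i + ee n j ∈ S ↔ ee n k + ee n l ∈ S := by
  rcases eq_or_ne l i with rfl | hli
  · rw [add_ee_mem_iff_of_ne hS hij hkl.symm, add_comm]
  · rw [add_ee_mem_iff_of_ne hS hij hli.symm, add_comm, add_ee_mem_iff_of_ne hS hli hkl.symm,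
      add_comm]

lemma pmEE_subset_of_reflV_mem (hS : ∀ γ ∈ pmEE n ∪ pm2E n, ∀ β ∈ S, reflV γ β ∈ S)
    {β : EuclideanSpace ℝ (Fin n)} (hβ : β ∈ pmEE n) (hβS : β ∈ S) : pmEE n ⊆ S := by
  rintro _ ⟨k, l, hkl, ε', δ', hε', hδ', rfl⟩
  obtain ⟨i, j, hij, ε, δ, hε, hδ, rfl⟩ := hβ
  rwa [smul_add_smul_mem_iff hS hkl hε' hδ', ← add_ee_mem_iff hS hij hkl,
    ← smul_add_smul_mem_iff hS hij hε hδ]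

end Orbit

end Combinatorics

section AffineReflection

variable {V Y : Type*} [NormedAddCommGroup V] [InnerProductSpace ℝ V] [AddCommGroup Y]
  [Module ℝ Y] {Φ₀ : Set V} {p : V → Y}

lemma reflA_snd_sub (hp : IsZLin Φ₀ p) {a b : V × Y} (ha : a.1 ∈ Φ₀) (hb : b.1 ∈ Φ₀) :
    (reflA a b).2 - p (reflA a b).1 =
      (b.2 - p b.1) - (2 * ⟪b.1, a.1⟫ / ⟪a.1, a.1⟫) • (a.2 - p a.1) := by
  simp only [reflA, Prod.snd_sub, Prod.fst_sub, Prod.smul_snd, Prod.smul_fst]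
  rw [← reflV, hp _ ha _ hb, smul_sub]
  abel

lemma reflA_mk_add (hp : IsZLin Φ₀ p) {γ β : V} (hγ : γ ∈ Φ₀) (hβ : β ∈ Φ₀) (z z' : Y) :
    reflA (γ, p γ + z') (β, p β + z) =
      (reflV γ β, p (reflV γ β) + (z - (2 * ⟪β, γ⟫ / ⟪γ, γ⟫) • z')) := by
  refine Prod.ext rfl (eq_add_of_sub_eq' ?_)
  refine (reflA_snd_sub hp (a := (γ, p γ + z')) (b := (β, p β + z)) hγ hβ).trans ?_
  simp only [add_sub_cancel_left]

lemma mk_add_reflV_mem (hp : IsZLin Φ₀ p) {Ψ' : Set (V × Y)}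
    (hcl : ∀ a ∈ Ψ', ∀ b ∈ Ψ', reflA a b ∈ Ψ') (hgraph : ∀ γ ∈ Φ₀, (γ, p γ) ∈ Ψ') {γ β : V}
    (hγ : γ ∈ Φ₀) (hβ : β ∈ Φ₀) {z : Y} (h : (β, p β + z) ∈ Ψ') :
    (reflV γ β, p (reflV γ β) + z) ∈ Ψ' := by
  have := reflA_mk_add hp hγ hβ z 0
  rw [add_zero, smul_zero, sub_zero] at this
  exact this ▸ hcl _ (hgraph γ hγ) _ h

end AffineReflection

section AffineRoots

variable {n : ℕ} {Y : Type*} [AddCommGroup Y] {Λs H : AddSubgroup Y} {Λℓ : Set Y}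
  {p : EuclideanSpace ℝ (Fin n) → Y}

def affineRoots (n : ℕ) (Λs : AddSubgroup Y) (Λℓ : Set Y) :
    Set (EuclideanSpace ℝ (Fin n) × Y) :=
  {x | x.1 ∈ pmEE n ∧ x.2 ∈ Λs} ∪ {x | x.1 ∈ pm2E n ∧ x.2 ∈ Λℓ}

def rootsOverCoset (n : ℕ) (H : AddSubgroup Y) (Λℓ : Set Y) (p : EuclideanSpace ℝ (Fin n) → Y) :
    Set (EuclideanSpace ℝ (Fin n) × Y) :=
  {x | ∃ α ∈ pmEE n, ∃ h ∈ H, x = (α, p α + h)} ∪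
    {x | x.1 ∈ pm2E n ∧ x.2 ∈ Λℓ ∧ ∃ h ∈ H, x.2 = p x.1 + h}

lemma mem_rootsOverCoset_iff {x : EuclideanSpace ℝ (Fin n) × Y} :
    x ∈ rootsOverCoset n H Λℓ p ↔
      x.2 - p x.1 ∈ H ∧ (x.1 ∈ pmEE n ∨ x.1 ∈ pm2E n ∧ x.2 ∈ Λℓ) := by
  constructor
  · rintro (⟨α, hα, h, hh, rfl⟩ | ⟨hα, hℓ, h, hh, hx⟩)
    · simpa using And.intro hh (Or.inl hα)
    · exact ⟨by rwa [hx, add_sub_cancel_left], Or.inr ⟨hα, hℓ⟩⟩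
  · rintro ⟨hH, hα | ⟨hα, hℓ⟩⟩
    · exact Or.inl ⟨x.1, hα, _, hH, by simp⟩
    · exact Or.inr ⟨hα, hℓ, _, hH, by simp⟩

lemma mk_mem_rootsOverCoset (hpl : ∀ α ∈ pm2E n, p α ∈ Λℓ) {γ : EuclideanSpace ℝ (Fin n)}
    (hγ : γ ∈ pmEE n ∪ pm2E n) : (γ, p γ) ∈ rootsOverCoset n H Λℓ p := by
  rw [mem_rootsOverCoset_iff, sub_self]
  exact ⟨zero_mem H, hγ.imp_right fun hγ => ⟨hγ, hpl γ hγ⟩⟩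

lemma rootsOverCoset_subset_affineRoots (hHle : H ≤ Λs) (hps : ∀ α ∈ pmEE n, p α ∈ Λs) :
    rootsOverCoset n H Λℓ p ⊆ affineRoots n Λs Λℓ := by
  rintro x hx
  obtain ⟨hH, hα | hα⟩ := mem_rootsOverCoset_iff.mp hx
  · refine Or.inl ⟨hα, ?_⟩
    simpa using add_mem (hps _ hα) (hHle hH)
  · exact Or.inr hα

lemma reflA_mem_rootsOverCoset [Module ℝ Y] (hℓs : Λℓ ⊆ Λs)
    (hℓ2 : ∀ x ∈ Λℓ, ∀ y ∈ Λs, x + 2 • y ∈ Λℓ) (hHle : H ≤ Λs)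
    (hlin : IsZLin (pmEE n ∪ pm2E n) p) (hps : ∀ α ∈ pmEE n, p α ∈ Λs)
    {a b : EuclideanSpace ℝ (Fin n) × Y} (ha : a ∈ rootsOverCoset n H Λℓ p)
    (hb : b ∈ rootsOverCoset n H Λℓ p) : reflA a b ∈ rootsOverCoset n H Λℓ p := by
  have haΛ : a.2 ∈ Λs := by
    rcases rootsOverCoset_subset_affineRoots hHle hps ha with ⟨-, h⟩ | ⟨-, h⟩
    exacts [h, hℓs h]
  rw [mem_rootsOverCoset_iff] at ha hb ⊢
  obtain ⟨haH, hγ⟩ := ha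
  obtain ⟨hbH, hβ⟩ := hb
  have hγ' : a.1 ∈ pmEE n ∪ pm2E n := hγ.imp_right And.left
  have hβ' : b.1 ∈ pmEE n ∪ pm2E n := hβ.imp_right And.left
  refine ⟨?_, ?_⟩
  · obtain ⟨k, hk⟩ := exists_int_eq_cartan hγ' (mem_intLattice_of_mem_roots hβ')
    rw [reflA_snd_sub hlin hγ' hβ', hk, Int.cast_smul_eq_zsmul]
    exact sub_mem hbH (zsmul_mem haH k)
  · rcases hβ with hβ | ⟨hβ, hbℓ⟩
    · exact Or.inl (reflV_mem_pmEE hγ' hβ)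
    refine Or.inr ⟨reflV_mem_pm2E hγ' hβ, ?_⟩
    obtain ⟨k, hk⟩ := exists_int_eq_cartan_of_mem_pm2E hγ' hβ
    have hsnd : (reflA a b).2 = b.2 + 2 • ((-k) • a.2) := by
      rw [reflA, Prod.snd_sub, Prod.smul_snd, hk, mul_smul, Int.cast_smul_eq_zsmul, two_smul,
        two_nsmul, neg_zsmul]
      abel
    rw [hsnd]
    exact hℓ2 _ hbℓ _ (zsmul_mem haΛ _)

lemma isRootSubsystem_rootsOverCoset [Module ℝ Y] (hn : 2 ≤ n) (hℓs : Λℓ ⊆ Λs)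
    (hℓ2 : ∀ x ∈ Λℓ, ∀ y ∈ Λs, x + 2 • y ∈ Λℓ) (hHle : H ≤ Λs)
    (hlin : IsZLin (pmEE n ∪ pm2E n) p) (hps : ∀ α ∈ pmEE n, p α ∈ Λs) :
    IsRootSubsystem reflA (affineRoots n Λs Λℓ) (rootsOverCoset n H Λℓ p) := by
  obtain ⟨α, hα⟩ := pmEE_nonempty hn
  refine ⟨⟨(α, p α), ?_⟩, rootsOverCoset_subset_affineRoots hHle hps,
    fun a ha b hb => reflA_mem_rootsOverCoset hℓs hℓ2 hHle hlin hps ha hb⟩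
  rw [mem_rootsOverCoset_iff, sub_self]
  exact ⟨zero_mem H, Or.inl hα⟩

lemma rootsOverCoset_ne_affineRoots (hn : 2 ≤ n) (hHle : H ≤ Λs) (hHne : H ≠ Λs)
    (hps : ∀ α ∈ pmEE n, p α ∈ Λs) : rootsOverCoset n H Λℓ p ≠ affineRoots n Λs Λℓ := by
  obtain ⟨y, hyΛ, hyH⟩ := SetLike.exists_of_lt (lt_of_le_of_ne hHle hHne)
  obtain ⟨α, hα⟩ := pmEE_nonempty hn
  intro heq
  have hmem : (α, p α + y) ∈ affineRoots n Λs Λℓ := Or.inl ⟨hα, add_mem (hps α hα) hyΛ⟩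
  rw [← heq, mem_rootsOverCoset_iff] at hmem
  exact hyH (by simpa using hmem.1)

section Maximality

variable [Module ℝ Y] {Ψ' : Set (EuclideanSpace ℝ (Fin n) × Y)}

def shortTranslations (p : EuclideanSpace ℝ (Fin n) → Y) (Ψ' : Set (EuclideanSpace ℝ (Fin n) × Y)) :
    Set Y :=
  {z | ∀ β ∈ pmEE n, (β, p β + z) ∈ Ψ'}

lemma mk_add_mem_of_mem_pmEE (hlin : IsZLin (pmEE n ∪ pm2E n) p)
    (hcl : ∀ a ∈ Ψ', ∀ b ∈ Ψ', reflA a b ∈ Ψ') (hgraph : ∀ γ ∈ pmEE n ∪ pm2E n, (γ, p γ) ∈ Ψ')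
    {β₀ : EuclideanSpace ℝ (Fin n)} (hβ₀ : β₀ ∈ pmEE n) {z : Y} (h₀ : (β₀, p β₀ + z) ∈ Ψ')
    {β : EuclideanSpace ℝ (Fin n)} (hβ : β ∈ pmEE n) : (β, p β + z) ∈ Ψ' := by
  refine (pmEE_subset_of_reflV_mem (S := {β | β ∈ pmEE n ∧ (β, p β + z) ∈ Ψ'}) ?_ hβ₀ ⟨hβ₀, h₀⟩
    hβ).2
  rintro γ hγ β ⟨hβ, h⟩
  exact ⟨reflV_mem_pmEE hγ hβ, mk_add_reflV_mem hlin hcl hgraph hγ (Or.inl hβ) h⟩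

lemma sub_mem_shortTranslations (hn : 3 ≤ n) (hlin : IsZLin (pmEE n ∪ pm2E n) p)
    (hcl : ∀ a ∈ Ψ', ∀ b ∈ Ψ', reflA a b ∈ Ψ') {z z' : Y} (hz : z ∈ shortTranslations p Ψ')
    (hz' : z' ∈ shortTranslations p Ψ') : z - z' ∈ shortTranslations p Ψ' := by
  intro β hβ
  obtain ⟨α, hα, hαβ⟩ := exists_mem_pmEE_inner_eq_one hn hβ
  have hγ := sub_mem_pmEE_of_inner_eq_one hα hβ hαβ
  have hnorm := fun {v} (hv : v ∈ pmEE n) => (mem_pmEE_iff.mp hv).2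
  have := hcl _ (hz' _ hγ) _ (hz α hα)
  rwa [reflA_mk_add hlin (Or.inl hγ) (Or.inl hα), cartan_sub_eq_one_of_inner_eq_one (hnorm hα)
    (hnorm hβ) hαβ, one_smul, reflV_sub_of_inner_eq_one (hnorm hα) (hnorm hβ) hαβ] at this

lemma exists_mk_add_mem_of_not_subset (hn : 2 ≤ n) (hlin : IsZLin (pmEE n ∪ pm2E n) p)
    (hΨ'Φ : Ψ' ⊆ affineRoots n Λs Λℓ) (hcl : ∀ a ∈ Ψ', ∀ b ∈ Ψ', reflA a b ∈ Ψ')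
    (hgraph : ∀ γ ∈ pmEE n ∪ pm2E n, (γ, p γ) ∈ Ψ')
    (hnot : ¬ Ψ' ⊆ rootsOverCoset n H Λℓ p) :
    ∃ β ∈ pmEE n, ∃ z ∉ H, (β, p β + z) ∈ Ψ' := by
  obtain ⟨x, hxΨ', hxΨ⟩ := Set.not_subset.mp hnot
  have hx : x = (x.1, p x.1 + (x.2 - p x.1)) := by simp
  rcases hΨ'Φ hxΨ' with ⟨hα, -⟩ | ⟨hα, hℓ⟩
  · refine ⟨x.1, hα, x.2 - p x.1, fun hH => hxΨ ?_, hx ▸ hxΨ'⟩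
    exact mem_rootsOverCoset_iff.mpr ⟨hH, Or.inl hα⟩
  · obtain ⟨β, hβ, hαβ⟩ := exists_mem_pmEE_inner_eq_two hn hα
    have hcartan : 2 * ⟪β, x.1⟫ / ⟪x.1, x.1⟫ = 1 := by
      rw [real_inner_comm, hαβ, inner_self_of_mem_pm2E hα]
      norm_num
    have := hcl _ hxΨ' _ (hgraph β (Or.inl hβ))
    rw [hx, ← add_zero (p β), reflA_mk_add hlin (Or.inr hα) (Or.inl hβ), hcartan, one_smul,
      zero_sub] at this
    refine ⟨_, reflV_mem_pmEE (Or.inr hα) hβ, _, fun hH => hxΨ ?_, this⟩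
    exact mem_rootsOverCoset_iff.mpr ⟨neg_mem_iff.mp hH, Or.inr ⟨hα, hℓ⟩⟩

lemma mk_mem_of_mem_pm2E (hn : 2 ≤ n) (hℓs : Λℓ ⊆ Λs)
    (hℓ2 : ∀ x ∈ Λℓ, ∀ y ∈ Λs, x + 2 • y ∈ Λℓ)
    (hsum : {y | ∃ x ∈ Λs, ∃ h ∈ H, y = 2 • x + h} = (Λs : Set Y))
    (hlin : IsZLin (pmEE n ∪ pm2E n) p) (hpl : ∀ α ∈ pm2E n, p α ∈ Λℓ)
    (hcl : ∀ a ∈ Ψ', ∀ b ∈ Ψ', reflA a b ∈ Ψ') (hsub : rootsOverCoset n H Λℓ p ⊆ Ψ')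
    (hshort : ∀ β ∈ pmEE n, ∀ z ∈ Λs, (β, p β + z) ∈ Ψ') {α : EuclideanSpace ℝ (Fin n)}
    (hα : α ∈ pm2E n) {μ : Y} (hμ : μ ∈ Λℓ) : (α, μ) ∈ Ψ' := by
  obtain ⟨x, hx, h, hh, hxh⟩ : μ - p α ∈ {y | ∃ x ∈ Λs, ∃ h ∈ H, y = 2 • x + h} := by
    rw [hsum]
    exact sub_mem (hℓs hμ) (hℓs (hpl α hα))
  have hbase : (α, p α + h) ∈ Ψ' := by
    refine hsub (mem_rootsOverCoset_iff.mpr ⟨by simpa using hh, Or.inr ⟨hα, ?_⟩⟩)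
    have : p α + h = μ + 2 • (-x) := by
      rw [smul_neg, ← sub_eq_add_neg, eq_sub_iff_add_eq, add_assoc, add_comm h, ← hxh]
      abel
    exact this ▸ hℓ2 μ hμ (-x) (neg_mem hx)
  obtain ⟨β, hβ, hαβ⟩ := exists_mem_pmEE_inner_eq_two hn hα
  have hcartan : 2 * ⟪α, β⟫ / ⟪β, β⟫ = 2 := by
    rw [hαβ, (mem_pmEE_iff.mp hβ).2]
    norm_num
  have hstep := hcl _ (hshort β hβ (-x) (neg_mem hx)) _ hbase
  rw [reflA_mk_add hlin (Or.inl hβ) (Or.inr hα), hcartan] at hstep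
  have hback := mk_add_reflV_mem hlin hcl (fun γ hγ => hsub (mk_mem_rootsOverCoset hpl hγ))
    (Or.inl hβ) (Or.inr (reflV_mem_pm2E (Or.inl hβ) hα)) hstep
  rw [reflV_reflV] at hback
  convert hback using 2
  rw [smul_neg, sub_neg_eq_add, two_smul, ← two_nsmul, ← sub_eq_iff_eq_add', hxh, add_comm]

lemma eq_affineRoots_of_rootsOverCoset_subset (hn : 3 ≤ n) (hℓs : Λℓ ⊆ Λs)
    (hℓ2 : ∀ x ∈ Λℓ, ∀ y ∈ Λs, x + 2 • y ∈ Λℓ)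
    (hHmax : ∀ N : AddSubgroup Y, H ≤ N → N ≤ Λs → N = H ∨ N = Λs)
    (hsum : {y | ∃ x ∈ Λs, ∃ h ∈ H, y = 2 • x + h} = (Λs : Set Y))
    (hlin : IsZLin (pmEE n ∪ pm2E n) p) (hps : ∀ α ∈ pmEE n, p α ∈ Λs)
    (hpl : ∀ α ∈ pm2E n, p α ∈ Λℓ) (hΨ' : IsRootSubsystem reflA (affineRoots n Λs Λℓ) Ψ')
    (hsub : rootsOverCoset n H Λℓ p ⊆ Ψ') (hne : Ψ' ≠ rootsOverCoset n H Λℓ p) :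
    Ψ' = affineRoots n Λs Λℓ := by
  obtain ⟨-, hΨ'Φ, hcl⟩ := hΨ'
  have hgraph : ∀ γ ∈ pmEE n ∪ pm2E n, (γ, p γ) ∈ Ψ' :=
    fun γ hγ => hsub (mk_mem_rootsOverCoset hpl hγ)
  obtain ⟨β₀, hβ₀, z₀, hz₀, h₀⟩ := exists_mk_add_mem_of_not_subset (by omega) hlin hΨ'Φ hcl
    hgraph fun h => hne (h.antisymm hsub)
  let K : AddSubgroup Y := AddSubgroup.ofSub (shortTranslations p Ψ')
    ⟨0, fun β hβ => by simpa using hgraph β (Or.inl hβ)⟩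
    fun z hz z' hz' => by simpa [sub_eq_add_neg] using sub_mem_shortTranslations hn hlin hcl hz hz'
  have hHK : H ≤ K := fun h hh β hβ =>
    hsub (mem_rootsOverCoset_iff.mpr ⟨by simpa using hh, Or.inl hβ⟩)
  have hKΛ : K ≤ Λs := fun z hz => by
    obtain ⟨β, hβ⟩ := pmEE_nonempty (n := n) (by omega)
    have hΛ : p β + z ∈ Λs := by
      rcases hΨ'Φ (hz β hβ) with ⟨-, h⟩ | ⟨-, h⟩
      exacts [h, hℓs h]
    simpa using sub_mem hΛ (hps β hβ)
  have hz₀K : z₀ ∈ K := fun β hβ => mk_add_mem_of_mem_pmEE hlin hcl hgraph hβ₀ h₀ hβ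
  have hK : K = Λs := (hHmax K hHK hKΛ).resolve_left fun h => hz₀ (h ▸ hz₀K)
  have hshort : ∀ β ∈ pmEE n, ∀ z ∈ Λs, (β, p β + z) ∈ Ψ' := fun β hβ z hz =>
    (show z ∈ K from hK ▸ hz) β hβ
  refine hΨ'Φ.antisymm ?_
  rintro ⟨α, μ⟩ (⟨hα, hμ⟩ | ⟨hα, hμ⟩)
  · simpa using hshort α hα (μ - p α) (sub_mem hμ (hps α hα))
  · exact mk_mem_of_mem_pm2E (by omega) hℓs hℓ2 hsum hlin hpl hcl hsub hshort hα hμ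

end Maximality

end AffineRoots

theorem stmt_6_general (n : ℕ) (hn : 3 ≤ n) (Y : Type*) [AddCommGroup Y] [Module ℝ Y]
    (Λs : AddSubgroup Y)
    (Λℓ : Set Y) (hℓs : Λℓ ⊆ (Λs : Set Y))
    (hℓ2 : ∀ x ∈ Λℓ, ∀ y ∈ Λs, x + 2 • y ∈ Λℓ)
    (Φ : Set (EuclideanSpace ℝ (Fin n) × Y))
    (hΦ : Φ = {x | x.1 ∈ pmEE n ∧ x.2 ∈ Λs} ∪ {x | x.1 ∈ pm2E n ∧ x.2 ∈ Λℓ})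
    (H : AddSubgroup Y) (hHle : H ≤ Λs) (hHne : H ≠ Λs)
    (hHmax : ∀ N : AddSubgroup Y, H ≤ N → N ≤ Λs → N = H ∨ N = Λs)
    (hsum : {y | ∃ x ∈ Λs, ∃ h ∈ H, y = 2 • x + h} = (Λs : Set Y))
    (p : EuclideanSpace ℝ (Fin n) → Y)
    (hlin : IsZLin (pmEE n ∪ pm2E n) p)
    (hps : ∀ α ∈ pmEE n, p α ∈ Λs)
    (hpl : ∀ α ∈ pm2E n, p α ∈ Λℓ)
    (Ψ : Set (EuclideanSpace ℝ (Fin n) × Y))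
    (hΨ : Ψ = {x | ∃ α ∈ pmEE n, ∃ h ∈ H, x = (α, p α + h)} ∪
      {x | x.1 ∈ pm2E n ∧ x.2 ∈ Λℓ ∧ ∃ h ∈ H, x.2 = p x.1 + h}) :
    IsMaximalRootSubsystem reflA Φ Ψ := by
  subst hΦ hΨ
  exact ⟨isRootSubsystem_rootsOverCoset (by omega) hℓs hℓ2 hHle hlin hps,
    rootsOverCoset_ne_affineRoots (by omega) hHle hHne hps,
    fun Ψ' hΨ' hsub hΨ'Φ => by_contra fun hne => hΨ'Φ
      (eq_affineRoots_of_rootsOverCoset_subset hn hℓs hℓ2 hHmax hsum hlin hps hpl hΨ' hsub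
        hne)⟩

/-- gradient `C_n`, `n ≥ 3`: if `H` is a maximal proper additive subgroup
of `Λ_s` with `2Λ_s + H = Λ_s`, and `p` is ℤ-linear with `p(α) ∈ Λ_s` for short `α` and
`p(α) ∈ Λ_ℓ` for long `α`, then
`Ψ = {(α, p(α)+h) : α short, h ∈ H} ∪ {(α, μ) : α long, μ ∈ (p(α)+H) ∩ Λ_ℓ}`
is a maximal root subsystem. -/
theorem stmt_6 (n : ℕ) (hn : 3 ≤ n) (Y : Type*) [AddCommGroup Y] [Module ℝ Y]
    [FiniteDimensional ℝ Y]
    (Λs : AddSubgroup Y) (hspan : Submodule.span ℝ (Λs : Set Y) = ⊤)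
    (Λℓ : Set Y) (h0ℓ : (0 : Y) ∈ Λℓ) (hℓs : Λℓ ⊆ (Λs : Set Y))
    (hℓneg : ∀ x ∈ Λℓ, -x ∈ Λℓ)
    (hℓ2 : ∀ x ∈ Λℓ, ∀ y ∈ Λs, x + 2 • y ∈ Λℓ)
    (Φ : Set (EuclideanSpace ℝ (Fin n) × Y))
    (hΦ : Φ = {x | x.1 ∈ pmEE n ∧ x.2 ∈ Λs} ∪ {x | x.1 ∈ pm2E n ∧ x.2 ∈ Λℓ})
    (H : AddSubgroup Y) (hHle : H ≤ Λs) (hHne : H ≠ Λs)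
    (hHmax : ∀ N : AddSubgroup Y, H ≤ N → N ≤ Λs → N = H ∨ N = Λs)
    (hsum : {y | ∃ x ∈ Λs, ∃ h ∈ H, y = 2 • x + h} = (Λs : Set Y))
    (p : EuclideanSpace ℝ (Fin n) → Y)
    (hlin : IsZLin (pmEE n ∪ pm2E n) p)
    (hps : ∀ α ∈ pmEE n, p α ∈ Λs)
    (hpl : ∀ α ∈ pm2E n, p α ∈ Λℓ)
    (Ψ : Set (EuclideanSpace ℝ (Fin n) × Y))
    (hΨ : Ψ = {x | ∃ α ∈ pmEE n, ∃ h ∈ H, x = (α, p α + h)} ∪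
      {x | x.1 ∈ pm2E n ∧ x.2 ∈ Λℓ ∧ ∃ h ∈ H, x.2 = p x.1 + h}) :
    IsMaximalRootSubsystem reflA Φ Ψ :=
  stmt_6_general n hn Y Λs Λℓ hℓs hℓ2 Φ hΦ H hHle hHne hHmax hsum p hlin hps hpl Ψ hΨ
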